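/- arXiv:1403.4121 — 2 statements merged into one kernel-verified Lean document; each statement's English description precedes it below -/
import Mathlib

section
/- For every 1 ≤ i < p, one has i!·g_i = g₁^i, the i-fold composite g₁ ∘ g₁ ∘ ⋯ ∘ g₁; equivalently g_i = g₁^i / i!. (Proposition 3.1(e).) -/
/-!
Write `g^n m = ∑_{i<p} n^i • g_i m` with `g_0 = id`. A polynomial of degree `< p` over `𝔽_p` is
determined by its values, so the coefficients are unique; hence each `g_i` is linear. Comparing
the coefficients of `n` in `g^n (g^k m) = g^(n+k) m` gives `g_1 (g^k m) = ∑ i k^(i-1) • g_i m`,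
and comparing coefficients in `k` then gives `g_1 ∘ g_j = (j+1) • g_(j+1)`; the case `j = p - 1`
is harmless because `p = 0` in `𝔽_p`. Induction on `i` yields `i! • g_i = g_1^i`.
-/

open Finset Polynomial

section CoefficientComparison

variable {K M : Type*} [Field K] [AddCommGroup M] [Module K M]

theorem eq_zero_of_forall_sum_pow_smul_eq_zero {N : ℕ} {c : ℕ → M} (S : Finset K)
    (hS : N ≤ #S) (h : ∀ x ∈ S, ∑ i ∈ range N, x ^ i • c i = 0) : ∀ j < N, c j = 0 := by
  intro j hj
  rw [← Module.forall_dual_apply_eq_zero_iff K]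
  intro φ
  set P : K[X] := ∑ i ∈ range N, C (φ (c i)) * X ^ i
  have hdeg : P.natDegree < #S := by
    refine lt_of_le_of_lt (natDegree_sum_le_of_forall_le _ _ (n := N - 1) fun i hi => ?_) (by omega)
    exact (natDegree_C_mul_X_pow_le _ _).trans (by rw [mem_range] at hi; omega)
  have hP : P = 0 := by
    refine eq_zero_of_natDegree_lt_card_of_eval_eq_zero' P S (fun x hx => ?_) hdeg
    simpa only [P, eval_finsetSum, eval_mul, eval_C, eval_pow, eval_X, mul_comm, map_sum,
      map_smul, smul_eq_mul, map_zero] using congrArg φ (h x hx)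
  simpa [P, finsetSum_coeff, coeff_C_mul, coeff_X_pow, hj] using congrArg (coeff · j) hP

theorem ZMod.eq_of_forall_sum_pow_smul_eq {p : ℕ} [Fact p.Prime] [Module (ZMod p) M]
    {c d : ℕ → M}
    (h : ∀ n : ℕ, ∑ i ∈ range p, (n : ZMod p) ^ i • c i = ∑ i ∈ range p, (n : ZMod p) ^ i • d i) :
    ∀ j < p, c j = d j := by
  intro j hj
  refine sub_eq_zero.mp (eq_zero_of_forall_sum_pow_smul_eq_zero (c := fun i => c i - d i)
    (univ : Finset (ZMod p)) (by simp) (fun x _ => ?_) j hj)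
  obtain ⟨n, rfl⟩ := ZMod.natCast_zmod_surjective x
  simp only [smul_sub, sum_sub_distrib, h n, sub_self]

end CoefficientComparison

theorem sum_add_pow_smul {R M : Type*} [CommSemiring R] [AddCommMonoid M] [Module R M]
    (N : ℕ) (x y : R) (c : ℕ → M) :
    ∑ i ∈ range N, (x + y) ^ i • c i =
      ∑ j ∈ range N, x ^ j • ∑ i ∈ range N, ((i.choose j : R) * y ^ (i - j)) • c i := by
  have hbinom : ∀ i ∈ range N,
      (x + y) ^ i = ∑ j ∈ range N, x ^ j * ((i.choose j : R) * y ^ (i - j)) := by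
    intro i hi
    rw [add_pow, sum_subset (range_subset_range.mpr (mem_range.mp hi))]
    · exact sum_congr rfl fun j _ => by ring
    · intro j _ hj
      rw [Nat.choose_eq_zero_of_lt (by simpa using hj)]
      simp
  simp_rw [smul_sum, smul_smul]
  rw [sum_comm]
  exact sum_congr rfl fun i hi => by rw [hbinom i hi, sum_smul]

def IsPowExpansion {p : ℕ} {M : Type*} [AddCommGroup M] [Module (ZMod p) M]
    (g : M →ₗ[ZMod p] M) (E : ℕ → M → M) : Prop :=
  ∀ m : M, ∀ n : ℕ, (g ^ n) m = ∑ i ∈ range p, (n : ZMod p) ^ i • E i m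

namespace IsPowExpansion

variable {p : ℕ} [Fact p.Prime] {M : Type*} [AddCommGroup M] [Module (ZMod p) M]
  {g : M →ₗ[ZMod p] M} {E : ℕ → M → M}

theorem apply_zero (hE : IsPowExpansion g E) (m : M) : E 0 m = m := by
  have h := hE m 0
  rw [pow_zero, Module.End.one_apply, Nat.cast_zero,
    sum_eq_single_of_mem 0 (mem_range.mpr (Fact.out : p.Prime).pos)] at h
  · simpa using h.symm
  · intro i _ hi
    simp [zero_pow hi]

theorem isLinearMap (hE : IsPowExpansion g E) {j : ℕ} (hj : j < p) :
    IsLinearMap (ZMod p) (E j) where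
  map_add a b := ZMod.eq_of_forall_sum_pow_smul_eq (c := fun i => E i (a + b))
    (d := fun i => E i a + E i b)
    (fun n => by simp only [smul_add, sum_add_distrib, ← hE _ n, map_add]) j hj
  map_smul r a := ZMod.eq_of_forall_sum_pow_smul_eq (c := fun i => E i (r • a))
    (d := fun i => r • E i a)
    (fun n => by simp only [smul_comm _ r, ← smul_sum, ← hE _ n, map_smul]) j hj

theorem apply_pow_apply (hE : IsPowExpansion g E) {j : ℕ} (hj : j < p) (m : M) (k : ℕ) :
    E j ((g ^ k) m) = ∑ i ∈ range p, ((i.choose j : ZMod p) * (k : ZMod p) ^ (i - j)) • E i m :=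
  ZMod.eq_of_forall_sum_pow_smul_eq (c := fun i => E i ((g ^ k) m))
    (d := fun j => ∑ i ∈ range p, ((i.choose j : ZMod p) * (k : ZMod p) ^ (i - j)) • E i m)
    (fun n => by
      rw [← hE, ← Module.End.mul_apply, ← pow_add, hE, Nat.cast_add, sum_add_pow_smul]) j hj

theorem one_comp_apply (hE : IsPowExpansion g E) {j : ℕ} (hj : j + 1 < p) (m : M) :
    E 1 (E j m) = ((j + 1 : ℕ) : ZMod p) • E (j + 1) m := by
  obtain ⟨q, rfl⟩ : ∃ q, p = q + 1 := ⟨p - 1, by omega⟩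
  refine ZMod.eq_of_forall_sum_pow_smul_eq (c := fun t => E 1 (E t m))
    (d := fun t => ((t + 1 : ℕ) : ZMod (q + 1)) • E (t + 1) m) (fun k => ?_) j
    (by omega : j < q + 1)
  calc ∑ t ∈ range (q + 1), (k : ZMod (q + 1)) ^ t • E 1 (E t m)
      = E 1 ((g ^ k) m) := by
        rw [hE m k, ← IsLinearMap.mk'_apply (hE.isLinearMap (by omega)), map_sum]
        simp only [map_smul, IsLinearMap.mk'_apply]
    _ = ∑ t ∈ range q, (k : ZMod (q + 1)) ^ t • ((t + 1 : ℕ) : ZMod (q + 1)) • E (t + 1) m := by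
        rw [hE.apply_pow_apply (by omega), sum_range_succ']
        simp [smul_smul, mul_comm]
    _ = _ := by
        rw [sum_range_succ, ZMod.natCast_self, zero_smul, smul_zero, add_zero]

theorem factorial_smul_eq_iterate (hE : IsPowExpansion g E) {i : ℕ} (hi : i < p) (m : M) :
    (i.factorial : ZMod p) • E i m = (E 1)^[i] m := by
  induction i with
  | zero => simp [hE.apply_zero]
  | succ i ih =>
    have hlin := hE.isLinearMap (j := 1) (Fact.out : p.Prime).one_lt
    rw [Function.iterate_succ_apply', ← ih (by omega), hlin.map_smul, hE.one_comp_apply hi,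
      smul_smul, Nat.factorial_succ, Nat.cast_mul, mul_comm]

end IsPowExpansion

theorem stmt_7_general (p : ℕ) [Fact p.Prime]
    (M : Type*) [AddCommGroup M] [Module (ZMod p) M]
    (g : M →ₗ[ZMod p] M)
    (gc : ℕ → M → M)
    (hgc : ∀ m : M, ∀ n : ℕ,
      (g ^ n) m = m + ∑ i ∈ Finset.Ico 1 p, ((n : ZMod p)) ^ i • gc i m) :
    ∀ i : ℕ, 1 ≤ i → i < p → ∀ m : M,
      (Nat.factorial i : ZMod p) • gc i m = (gc 1)^[i] m := by
  let E : ℕ → M → M := fun i => if i = 0 then id else gc i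
  have hE : IsPowExpansion g E := fun m n => by
    rw [hgc, range_eq_Ico, sum_eq_sum_Ico_succ_bot (Fact.out : p.Prime).pos]
    refine congrArg₂ _ (by simp [E]) (sum_congr rfl fun i hi => ?_)
    simp [E, (Nat.one_le_iff_ne_zero.mp (mem_Ico.mp hi).1)]
  intro i hi hip m
  simpa [E, Nat.one_le_iff_ne_zero.mp hi] using hE.factorial_smul_eq_iterate hip m

/-- **Proposition 3.1 (e).** With `g` and the unique coefficient maps `g_i` as in
Proposition 3.1, for `1 ≤ i < p` one has `i!·g_i = g₁^i` (the `i`-fold composite of `g₁`);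
equivalently `g_i = g₁^i / i!`. -/
theorem stmt_7 (p : ℕ) [Fact p.Prime] (hp : 2 < p)
    (M : Type*) [AddCommGroup M] [Module (ZMod p) M]
    (g : M →ₗ[ZMod p] M) (hgp : g ^ p = 1)
    (gc : ℕ → M → M)
    (hgc : ∀ m : M, ∀ n : ℕ,
      (g ^ n) m = m + ∑ i ∈ Finset.Ico 1 p, ((n : ZMod p)) ^ i • gc i m) :
    ∀ i : ℕ, 1 ≤ i → i < p → ∀ m : M,
      (Nat.factorial i : ZMod p) • gc i m = (gc 1)^[i] m :=
  stmt_7_general p M g gc hgc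
end

section
/- For every integer j ≥ 1 and every u ∈ 1 + A^j there exist unique elements d₁, …, d_{p−1} ∈ A with d_i ∈ A^{i+j−1} for each i, such that for every integer n ≥ 0 one has u·B(u)·B²(u)⋯B^{n−1}(u) = 1 + Σ_{1≤i≤p−1} d_i·n̄^i, where the empty product (case n = 0) is 1 and n̄ denotes the image of n in 𝔽_p. (This is the associative-algebra form, proved via enveloping algebras, of Propositions 3.2 and 3.4.) -/
/-!
Write `P n = u · B(u) ⋯ B^{n-1}(u)` and `a n = B^n(u - 1)`, so that `P (n+1) = P n · (1 + a n)`.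
Call a sequence filtered of degree `α` if its `k`-th forward differences lie in `A^{α+k}`;
such sequences are stable under shifts and sums, differences raise the degree by one, and
degrees add under products (Leibniz rule). The hypothesis on `B` makes `a` filtered of
degree `j`. Since `Δ(P · g) = P · T g` with `T g n = (1 + a n) g (n+1) - g n`,
and `T` raises the degree by one, `Δ^{i+1} P 0 = (T^i a) 0 ∈ A^{j+i}`, which vanishes once
`i + 1 ≥ p`. Newton's forward difference formula then writes `P n` as
`1 + Σ_{1 ≤ i < p} C(n, i) Δ^i P 0`, and for `i < p` the binomial coefficient `C(n, i)` mod `p`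
is a polynomial of degree `i` in `n̄` without constant term.
Uniqueness: the power sums `Σ_{x ∈ 𝔽_p^×} x^m` detect `m ≡ 0 mod p - 1`, which separates the
monomials `x, …, x^{p-1}`.
-/

open Finset Polynomial fwdDiff
open scoped Nat

theorem sum_range_eq_add_sum_Icc {M : Type*} [AddCommMonoid M] (f : ℕ → M) {q : ℕ} (hq : q ≠ 0) :
    ∑ i ∈ range q, f i = f 0 + ∑ i ∈ Icc 1 (q - 1), f i := by
  rw [range_eq_Ico, sum_eq_sum_Ico_succ_bot (Nat.pos_of_ne_zero hq),
    ← Finset.Icc_sub_one_right_eq_Ico_of_not_isMin (by simpa using hq)]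

theorem eval_eq_sum_Icc_of_coeff_zero {R : Type*} [CommSemiring R] {Q : R[X]} {q : ℕ}
    (hdeg : Q.natDegree < q) (h0 : Q.coeff 0 = 0) (x : R) :
    Q.eval x = ∑ k ∈ Icc 1 (q - 1), Q.coeff k * x ^ k := by
  rw [eval_eq_sum_range' hdeg, sum_range_eq_add_sum_Icc _ (by omega), h0, zero_mul, zero_add]

theorem eq_sum_range_choose_smul_fwdDiff_iter {G : Type*} [AddCommGroup G] (f : ℕ → G) {q : ℕ}
    (hf : ∀ i, q ≤ i → (Δ_[1])^[i] f 0 = 0) (n : ℕ) :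
    f n = ∑ i ∈ range q, n.choose i • (Δ_[1])^[i] f 0 := by
  have key := shift_eq_sum_fwdDiff_iter 1 f n 0
  rw [zero_add, smul_eq_mul, mul_one] at key
  rw [key, sum_subset (range_subset_range.2 (le_max_left (n + 1) q)),
    sum_subset (range_subset_range.2 (le_max_right (n + 1) q))]
  · intro i _ hi
    rw [hf i (by simpa using hi), smul_zero]
  · intro i _ hi
    rw [Nat.choose_eq_zero_of_lt (by simp at hi; omega), zero_smul]

section ZModInterpolation

noncomputable def choosePoly (p i : ℕ) : (ZMod p)[X] :=
  C ((i ! : ZMod p)⁻¹) * descPochhammer (ZMod p) i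

noncomputable def monomialCoeff {M : Type*} [AddCommGroup M] (p : ℕ) [Module (ZMod p) M]
    (e : ℕ → M) (k : ℕ) : M :=
  ∑ i ∈ Icc 1 (p - 1), (choosePoly p i).coeff k • e i

variable {p : ℕ} [Fact p.Prime]

theorem choosePoly_natDegree_le (i : ℕ) : (choosePoly p i).natDegree ≤ i :=
  (natDegree_C_mul_le _ _).trans (descPochhammer_natDegree _ i).le

theorem choosePoly_coeff_zero {i : ℕ} (hi : i ≠ 0) : (choosePoly p i).coeff 0 = 0 := by
  simp [choosePoly, coeff_zero_eq_eval_zero, hi]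

theorem choosePoly_eval_natCast {i : ℕ} (hi : i < p) (n : ℕ) :
    (choosePoly p i).eval (n : ZMod p) = n.choose i := by
  have hfac : (i ! : ZMod p) ≠ 0 := by
    rw [Ne, ZMod.natCast_eq_zero_iff, Nat.Prime.dvd_factorial Fact.out]
    omega
  rw [choosePoly, eval_mul, eval_C, descPochhammer_eval_eq_descFactorial,
    Nat.descFactorial_eq_factorial_mul_choose, Nat.cast_mul, inv_mul_cancel_left₀ hfac]

variable {M : Type*} [AddCommGroup M] [Module (ZMod p) M]

theorem sum_choose_smul_eq_sum_pow_smul_monomialCoeff (e : ℕ → M) (n : ℕ) :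
    ∑ i ∈ Icc 1 (p - 1), (n.choose i : ZMod p) • e i =
      ∑ k ∈ Icc 1 (p - 1), (n : ZMod p) ^ k • monomialCoeff p e k := by
  calc ∑ i ∈ Icc 1 (p - 1), (n.choose i : ZMod p) • e i
      = ∑ i ∈ Icc 1 (p - 1), ∑ k ∈ Icc 1 (p - 1),
          (n : ZMod p) ^ k • (choosePoly p i).coeff k • e i := by
        refine sum_congr rfl fun i hi => ?_
        obtain ⟨hi1, hip⟩ := mem_Icc.1 hi
        rw [← choosePoly_eval_natCast (by omega), eval_eq_sum_Icc_of_coeff_zero (q := p)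
          ((choosePoly_natDegree_le i).trans_lt (by omega)) (choosePoly_coeff_zero (by omega)),
          sum_smul]
        simp only [smul_smul, mul_comm]
    _ = _ := by
        rw [sum_comm]
        simp only [monomialCoeff, smul_sum]

theorem eq_add_sum_pow_smul_monomialCoeff (f : ℕ → M) (hf : ∀ i, p ≤ i → (Δ_[1])^[i] f 0 = 0)
    (n : ℕ) :
    f n = f 0 +
      ∑ k ∈ Icc 1 (p - 1), (n : ZMod p) ^ k • monomialCoeff p (fun i => (Δ_[1])^[i] f 0) k := by
  rw [eq_sum_range_choose_smul_fwdDiff_iter f hf n,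
    sum_range_eq_add_sum_Icc _ (Fact.out : p.Prime).ne_zero, Nat.choose_zero_right, one_smul,
    ← sum_choose_smul_eq_sum_pow_smul_monomialCoeff]
  simp only [Nat.cast_smul_eq_nsmul, Function.iterate_zero, id]

theorem monomialCoeff_mem {S : ℕ → AddSubgroup M} (hS : Antitone S) {e : ℕ → M} {j : ℕ}
    (he : ∀ i ∈ Icc 1 (p - 1), e i ∈ S (i + j - 1)) (k : ℕ) :
    monomialCoeff p e k ∈ S (k + j - 1) := by
  refine sum_mem fun i hi => ?_
  rcases le_or_gt k i with hki | hik
  · exact (AddSubgroup.toZModSubmodule p (S (k + j - 1))).smul_mem _ (hS (by omega) (he i hi))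
  · rw [coeff_eq_zero_of_natDegree_lt ((choosePoly_natDegree_le i).trans_lt hik), zero_smul]
    exact zero_mem _

end ZModInterpolation

section DiffFiltered

variable {A : Type*} [Ring A] {F : ℕ → AddSubgroup A}

def IsDiffFiltered (F : ℕ → AddSubgroup A) (α : ℕ) (f : ℕ → A) : Prop :=
  ∀ k n, (Δ_[1])^[k] f n ∈ F (α + k)

theorem fwdDiff_mul_apply (f g : ℕ → A) (n : ℕ) :
    Δ_[1] (f * g) n = f (n + 1) * Δ_[1] g n + Δ_[1] f n * g n := by
  simp only [fwdDiff, Pi.mul_apply, mul_sub, sub_mul]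
  abel

namespace IsDiffFiltered

variable {f g : ℕ → A} {α β : ℕ}

theorem mono (hF : Antitone F) (hf : IsDiffFiltered F α f) (h : β ≤ α) :
    IsDiffFiltered F β f :=
  fun k n => hF (by omega) (hf k n)

theorem fwdDiff (hf : IsDiffFiltered F α f) : IsDiffFiltered F (α + 1) (Δ_[1] f) := by
  intro k n
  rw [← Function.iterate_succ_apply, add_right_comm, add_assoc]
  exact hf (k + 1) n

theorem comp_add_one (hf : IsDiffFiltered F α f) : IsDiffFiltered F α (fun n => f (n + 1)) := by
  intro k n
  rw [fwdDiff_iter_comp_add]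
  exact hf k (n + 1)

theorem add (hf : IsDiffFiltered F α f) (hg : IsDiffFiltered F α g) :
    IsDiffFiltered F α (f + g) := by
  intro k n
  rw [fwdDiff_iter_add]
  exact add_mem (hf k n) (hg k n)

theorem mul (hFmul : ∀ i j, ∀ a ∈ F i, ∀ b ∈ F j, a * b ∈ F (i + j))
    (hf : IsDiffFiltered F α f) (hg : IsDiffFiltered F β g) :
    IsDiffFiltered F (α + β) (f * g) := by
  intro k
  induction k generalizing f g α β with
  | zero => exact fun n => hFmul α β _ (hf 0 n) _ (hg 0 n)
  | succ k ih =>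
    intro n
    have hleib : Δ_[1] (f * g) = (fun n => f (n + 1)) * Δ_[1] g + Δ_[1] f * g :=
      funext (fwdDiff_mul_apply f g)
    rw [Function.iterate_succ_apply, hleib, fwdDiff_iter_add]
    refine add_mem ?_ ?_
    · simpa only [add_assoc, add_comm 1 k] using ih hf.comp_add_one hg.fwdDiff n
    · simpa only [add_right_comm α 1 β, add_assoc, add_comm 1 k] using ih hf.fwdDiff hg n

end IsDiffFiltered

theorem RingAut.pow_apply_mem (hF : Antitone F) {B : RingAut A}
    (hB : ∀ i, ∀ a ∈ F i, B a - a ∈ F (i + 1)) (n : ℕ) {i : ℕ} {x : A} (hx : x ∈ F i) :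
    (B ^ n) x ∈ F i := by
  induction n generalizing x with
  | zero => exact hx
  | succ n ih =>
    rw [pow_succ, RingAut.mul_apply]
    exact ih (by simpa using add_mem hx (hF (Nat.le_succ i) (hB i x hx)))

theorem isDiffFiltered_pow_apply (hF : Antitone F) {B : RingAut A}
    (hB : ∀ i, ∀ a ∈ F i, B a - a ∈ F (i + 1)) {α : ℕ} {x : A} (hx : x ∈ F α) :
    IsDiffFiltered F α (fun n => (B ^ n) x) := by
  intro k
  induction k generalizing α x with
  | zero => exact fun n => RingAut.pow_apply_mem hF hB n hx
  | succ k ih =>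
    intro n
    have hdiff : Δ_[1] (fun n => (B ^ n) x) = fun n => (B ^ n) (B x - x) := by
      ext n
      rw [fwdDiff, map_sub, pow_succ, RingAut.mul_apply]
    rw [Function.iterate_succ_apply, hdiff, ← add_assoc, add_right_comm]
    exact ih (hB α x hx) n

def twistFwdDiff (a g : ℕ → A) : ℕ → A := fun n => (1 + a n) * g (n + 1) - g n

section twist

variable {P a : ℕ → A} (hP : ∀ n, P (n + 1) = P n * (1 + a n))
include hP

theorem fwdDiff_mul_eq_mul_twistFwdDiff (g : ℕ → A) :
    Δ_[1] (P * g) = P * twistFwdDiff a g := by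
  ext n
  simp only [fwdDiff, twistFwdDiff, Pi.mul_apply, hP, mul_sub, mul_assoc]

theorem fwdDiff_iter_eq_mul_twistFwdDiff_iter (i : ℕ) :
    (Δ_[1])^[i] P = P * (twistFwdDiff a)^[i] 1 := by
  induction i with
  | zero => simp
  | succ i ih =>
    rw [Function.iterate_succ_apply', ih, fwdDiff_mul_eq_mul_twistFwdDiff hP,
      ← Function.iterate_succ_apply' (twistFwdDiff a)]

end twist

theorem IsDiffFiltered.twistFwdDiff (hF : Antitone F)
    (hFmul : ∀ i j, ∀ a ∈ F i, ∀ b ∈ F j, a * b ∈ F (i + j)) {a g : ℕ → A} {α : ℕ}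
    (hg : IsDiffFiltered F α g) (ha : IsDiffFiltered F 1 a) :
    IsDiffFiltered F (α + 1) (_root_.twistFwdDiff a g) := by
  have hsplit : _root_.twistFwdDiff a g = Δ_[1] g + a * fun n => g (n + 1) := by
    ext n
    simp only [_root_.twistFwdDiff, _root_.fwdDiff, Pi.add_apply, Pi.mul_apply, add_mul, one_mul]
    abel
  rw [hsplit]
  exact hg.fwdDiff.add ((ha.mul hFmul hg.comp_add_one).mono hF (by omega))

theorem fwdDiff_iter_succ_apply_zero_mem (hF : Antitone F)
    (hFmul : ∀ i j, ∀ a ∈ F i, ∀ b ∈ F j, a * b ∈ F (i + j)) {P a : ℕ → A}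
    (hP : ∀ n, P (n + 1) = P n * (1 + a n)) (hP0 : P 0 = 1) {j : ℕ} (hj : 1 ≤ j)
    (ha : IsDiffFiltered F j a) (i : ℕ) :
    (Δ_[1])^[i + 1] P 0 ∈ F (j + i) := by
  have htwist : ∀ i, IsDiffFiltered F (j + i) ((twistFwdDiff a)^[i] a) := by
    intro i
    induction i with
    | zero => exact ha
    | succ i ih =>
      rw [Function.iterate_succ_apply']
      exact ih.twistFwdDiff hF hFmul (ha.mono hF hj)
  have hone : twistFwdDiff a 1 = a := by ext n; simp [_root_.twistFwdDiff]
  rw [fwdDiff_iter_eq_mul_twistFwdDiff_iter hP, Pi.mul_apply, hP0, one_mul,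
    Function.iterate_succ_apply, hone]
  exact htwist i 0 0

end DiffFiltered

theorem eq_zero_of_forall_sum_pow_smul_eq_zero_s8 {K M : Type*} [Field K] [Fintype K]
    [AddCommGroup M] [Module K M] {m : ℕ → M}
    (hm : ∀ x : K, ∑ i ∈ Icc 1 (Fintype.card K - 1), x ^ i • m i = 0) {k : ℕ}
    (hk : k ∈ Icc 1 (Fintype.card K - 1)) : m k = 0 := by
  classical
  set q := Fintype.card K
  have hdvd : ∀ i ∈ Icc 1 (q - 1), q - 1 ∣ q - 1 - k + i ↔ i = k := by
    intro i hi
    rw [mem_Icc] at hi hk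
    refine ⟨fun h => ?_, fun h => ⟨1, by omega⟩⟩
    have := Nat.eq_of_dvd_of_lt_two_mul (by omega) h (by omega)
    omega
  have hsum : ∑ i ∈ Icc 1 (q - 1), (∑ x : Kˣ, (x ^ (q - 1 - k + i) : K)) • m i = -m k := by
    simp only [FiniteField.sum_pow_units, ite_smul, neg_one_smul, zero_smul]
    rw [sum_congr rfl fun i hi => if_congr (hdvd i hi) rfl rfl, sum_ite_eq' _ k, if_pos hk]
  rw [← neg_eq_zero, ← hsum]
  calc ∑ i ∈ Icc 1 (q - 1), (∑ x : Kˣ, (x ^ (q - 1 - k + i) : K)) • m i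
      = ∑ x : Kˣ, (x ^ (q - 1 - k) : K) • ∑ i ∈ Icc 1 (q - 1), (x : K) ^ i • m i := by
        simp only [sum_smul, smul_sum, smul_smul, pow_add]
        exact sum_comm
    _ = 0 := sum_eq_zero fun x _ => by rw [hm, smul_zero]

theorem stmt_8_general (p : ℕ) [Fact p.Prime]
    (A : Type*) [Ring A] [Algebra (ZMod p) A]
    (F : ℕ → AddSubgroup A)
    (hFanti : ∀ i j : ℕ, i ≤ j → F j ≤ F i)
    (hFmul : ∀ i j : ℕ, ∀ a ∈ F i, ∀ b ∈ F j, a * b ∈ F (i + j))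
    (hFp : F p = ⊥)
    (B : RingAut A)
    (hB : ∀ i : ℕ, ∀ a ∈ F i, B a - a ∈ F (i + 1))
    (j : ℕ) (hj : 1 ≤ j) (u : A) (hu : u - 1 ∈ F j) :
    ∃ d : ℕ → A,
      (∀ i : ℕ, 1 ≤ i → i ≤ p - 1 → d i ∈ F (i + j - 1)) ∧
      (∀ n : ℕ,
        ((List.range n).map fun m => (B ^ m) u).prod =
          1 + ∑ i ∈ Finset.Icc 1 (p - 1), ((n : ZMod p)) ^ i • d i) ∧
      (∀ d' : ℕ → A,
        (∀ i : ℕ, 1 ≤ i → i ≤ p - 1 → d' i ∈ F (i + j - 1)) →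
        (∀ n : ℕ,
          ((List.range n).map fun m => (B ^ m) u).prod =
            1 + ∑ i ∈ Finset.Icc 1 (p - 1), ((n : ZMod p)) ^ i • d' i) →
        ∀ i : ℕ, 1 ≤ i → i ≤ p - 1 → d' i = d i) := by
  set P : ℕ → A := fun n => ((List.range n).map fun m => (B ^ m) u).prod
  have hP : ∀ n, P (n + 1) = P n * (1 + (B ^ n) (u - 1)) := fun n => by
    simp only [P, List.range_succ, List.map_append, List.map_singleton, List.prod_append,
      List.prod_singleton, map_sub, map_one, add_sub_cancel]
  have hP0 : P 0 = 1 := by simp [P]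
  have hdiff : ∀ i, (Δ_[1])^[i + 1] P 0 ∈ F (j + i) :=
    fwdDiff_iter_succ_apply_zero_mem hFanti hFmul hP hP0 hj (isDiffFiltered_pow_apply hFanti hB hu)
  have hvanish : ∀ i, p ≤ i → (Δ_[1])^[i] P 0 = 0 := by
    intro i hi
    obtain ⟨i, rfl⟩ : ∃ i', i = i' + 1 := ⟨i - 1, by have := (Fact.out : p.Prime).pos; omega⟩
    simpa [hFp] using hFanti p (j + i) (by omega) (hdiff i)
  have hexp := eq_add_sum_pow_smul_monomialCoeff P hvanish
  set d := monomialCoeff p fun i => (Δ_[1])^[i] P 0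
  refine ⟨d, fun i _ _ => monomialCoeff_mem hFanti (fun i hi => ?_) i, fun n => hP0 ▸ hexp n, ?_⟩
  · obtain ⟨i, rfl⟩ : ∃ i', i = i' + 1 := ⟨i - 1, by simp at hi; omega⟩
    simpa [add_comm] using hdiff i
  intro d' _ hd' i hi1 hi2
  refine sub_eq_zero.1 (eq_zero_of_forall_sum_pow_smul_eq_zero_s8 (K := ZMod p)
    (m := fun i => d' i - d i) (fun x => ?_) (by simpa [ZMod.card] using And.intro hi1 hi2))
  have hx := (hd' x.val).symm.trans (hP0 ▸ hexp x.val)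
  rw [ZMod.natCast_zmod_val, add_left_cancel_iff] at hx
  simp only [ZMod.card, smul_sub, sum_sub_distrib, hx, sub_self]

/-- **Propositions 3.2/3.4 (associative-algebra form).** Let `A` be an associative unital
`𝔽_p`-algebra with a decreasing filtration by two-sided ideals `A = A⁰ ⊇ A¹ ⊇ ⋯` with
`A^i·A^j ⊆ A^{i+j}` and `A^p = 0`, and let `B` be a ring automorphism with
`(B − id)(A^i) ⊆ A^{i+1}`.  Then for every `j ≥ 1` and every `u ∈ 1 + A^j` there are unique
`d₁, …, d_{p−1}` with `d_i ∈ A^{i+j−1}` such that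
`u·B(u)⋯B^{n−1}(u) = 1 + Σ_{1≤i≤p−1} d_i·n̄^i` for all `n ≥ 0`. -/
theorem stmt_8 (p : ℕ) [Fact p.Prime] (hp : 2 < p)
    (A : Type*) [Ring A] [Algebra (ZMod p) A]
    (F : ℕ → AddSubgroup A)
    (hF0 : F 0 = ⊤)
    (hFanti : ∀ i j : ℕ, i ≤ j → F j ≤ F i)
    (hFmul : ∀ i j : ℕ, ∀ a ∈ F i, ∀ b ∈ F j, a * b ∈ F (i + j))
    (hFp : F p = ⊥)
    (B : RingAut A)
    (hB : ∀ i : ℕ, ∀ a ∈ F i, B a - a ∈ F (i + 1))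
    (j : ℕ) (hj : 1 ≤ j) (u : A) (hu : u - 1 ∈ F j) :
    ∃ d : ℕ → A,
      (∀ i : ℕ, 1 ≤ i → i ≤ p - 1 → d i ∈ F (i + j - 1)) ∧
      (∀ n : ℕ,
        ((List.range n).map fun m => (B ^ m) u).prod =
          1 + ∑ i ∈ Finset.Icc 1 (p - 1), ((n : ZMod p)) ^ i • d i) ∧
      (∀ d' : ℕ → A,
        (∀ i : ℕ, 1 ≤ i → i ≤ p - 1 → d' i ∈ F (i + j - 1)) →
        (∀ n : ℕ,
          ((List.range n).map fun m => (B ^ m) u).prod =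
            1 + ∑ i ∈ Finset.Icc 1 (p - 1), ((n : ZMod p)) ^ i • d' i) →
        ∀ i : ℕ, 1 ≤ i → i ≤ p - 1 → d' i = d i) :=
  stmt_8_general p A F hFanti hFmul hFp B hB j hj u hu
end
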